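/- Assume f \in C^1([0,\infty)). Let u be a positive solution of the one-dimensional problem (1), let w be a solution of the linearized problem (4), and define T(x) = x\,[\,(p-1)\varphi_p(u'(x))\,w'(x) + \lambda f(u(x))\,w(x)\,] - (p-1)\varphi_p(u'(x))\,w(x). Then T'(x) = p\,\lambda\, f(u(x))\,w(x) for all x \in (-1,1). -/

import Mathlib

open Set

/-- `φ_p(t) = t |t|^{p-2}` (real exponent), with `φ_p(0)=0`. -/
noncomputable def phi (p t : ℝ) : ℝ := t * |t| ^ (p - 2)

/-- `φ_p'(t) = (p-1) |t|^{p-2}`. -/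
noncomputable def phi' (p t : ℝ) : ℝ := (p - 1) * |t| ^ (p - 2)

/-- The derivative of a function on `[-1,1]` (one-sided at the endpoints). -/
noncomputable def du (u : ℝ → ℝ) : ℝ → ℝ := derivWithin u (Set.Icc (-1) 1)

/-- A positive (classical) solution of the one-dimensional problem (1):
`(φ_p(u'))' + λ f(u) = 0` on `(-1,1)`, `u(-1) = u(1) = 0`,
with `u ∈ C^1[-1,1]`, `φ_p ∘ u' ∈ C^1((-1,1))`, and `u > 0` on `(-1,1)`. -/
structure Sol1D (p lam : ℝ) (f : ℝ → ℝ) (u : ℝ → ℝ) : Prop where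
  reg : ContDiffOn ℝ 1 u (Set.Icc (-1) 1)
  reg' : ContDiffOn ℝ 1 (fun x => phi p (du u x)) (Set.Ioo (-1) 1)
  pos : ∀ x ∈ Set.Ioo (-1:ℝ) 1, 0 < u x
  bcm : u (-1) = 0
  bc1 : u 1 = 0
  ode : ∀ x ∈ Set.Ioo (-1:ℝ) 1,
    deriv (fun y => phi p (du u y)) x + lam * f (u x) = 0

/-- A solution of the linearized problem (4) at `u`:
`(φ_p'(u') w')' + λ f'(u) w = 0` on `(-1,1)`, `w(-1) = w(1) = 0`. -/
structure Lin1D (p lam : ℝ) (f : ℝ → ℝ) (u w : ℝ → ℝ) : Prop where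
  reg : ContDiffOn ℝ 1 w (Set.Icc (-1) 1)
  reg' : ContDiffOn ℝ 1 (fun x => phi' p (du u x) * du w x) (Set.Ioo (-1) 1)
  ode : ∀ x ∈ Set.Ioo (-1:ℝ) 1,
    deriv (fun y => phi' p (du u y) * du w y) x + lam * deriv f (u x) * w x = 0
  bcm : w (-1) = 0
  bc1 : w 1 = 0

/-!
Write `B = (p-1) φ_p(u') w' + λ f(u) w`. Since `t φ_p'(t) = (p-1) φ_p(t)`, also
`B = u' · (φ_p'(u') w') + λ f(u) w`, and `B` is constant: where `u' ≠ 0`, `u' = φ_{p/(p-1)}(φ_p(u'))`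
is differentiable and the product rule with both equations gives `B' = 0`; where `u' = 0`, both
`φ_p(u')` and (for `p ≠ 2`) `φ_p'(u') w'` vanish, so the two expressions of `(p-1) φ_p(u') w'` are
differentiable with derivatives `(p-1)(φ_p(u'))' w'` and `u' (φ_p'(u') w')' = 0`, which forces
`(φ_p(u'))' w' = 0` there. Hence `T' = B - (p-1)(φ_p(u') w)' = p λ f(u) w`.
-/

open Filter Topology

theorem HasDerivAt.mul_continuousAt_of_eq_zero {𝕜 : Type*} [NontriviallyNormedField 𝕜]
    {G W : 𝕜 → 𝕜} {x d : 𝕜} (hG : HasDerivAt G d x) (hGx : G x = 0)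
    (hW : ContinuousAt W x) : HasDerivAt (fun y => G y * W y) (d * W x) x := by
  rw [hasDerivAt_iff_tendsto_slope] at hG ⊢
  refine (hG.mul hW.continuousWithinAt.tendsto).congr fun y => ?_
  simp only [slope_def_field, hGx, sub_zero, zero_mul, div_mul_eq_mul_div]

section Phi

variable {p : ℝ}

theorem hasDerivAt_phi {t : ℝ} (ht : t ≠ 0) : HasDerivAt (phi p) (phi' p t) t := by
  have ht' : |t| ≠ 0 := abs_ne_zero.2 ht
  refine ((hasDerivAt_id' t).mul
    ((hasDerivAt_abs ht).rpow_const (p := p - 2) (Or.inl ht'))).congr_deriv ?_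
  rw [phi', Real.rpow_sub_one ht']
  field_simp
  linear_combination (p - 2) * self_mul_sign t

theorem abs_phi (hp : p ≠ 1) (t : ℝ) : |phi p t| = |t| ^ (p - 1) := by
  rcases eq_or_ne t 0 with rfl | ht
  · simp [phi, Real.zero_rpow (sub_ne_zero.2 hp)]
  · rw [phi, abs_mul, abs_of_nonneg (Real.rpow_nonneg (abs_nonneg t) _),
      show p - 1 = p - 2 + 1 by ring, Real.rpow_add_one (abs_ne_zero.2 ht), mul_comm]

theorem phi_ne_zero (hp : p ≠ 1) {t : ℝ} (ht : t ≠ 0) : phi p t ≠ 0 := by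
  rw [← abs_pos, abs_phi hp]
  exact Real.rpow_pos_of_pos (abs_pos.2 ht) _

theorem phi_conjExponent_phi (hp : p ≠ 1) (t : ℝ) : phi p.conjExponent (phi p t) = t := by
  rcases eq_or_ne t 0 with rfl | ht
  · simp [phi]
  have hp' : p - 1 ≠ 0 := sub_ne_zero.2 hp
  rw [phi, abs_phi hp, ← Real.rpow_mul (abs_nonneg t), phi, mul_assoc,
    ← Real.rpow_add (abs_pos.2 ht), Real.conjExponent]
  convert mul_one t
  convert Real.rpow_zero |t| using 2
  field_simp
  ring

theorem phi'_conjExponent_phi_mul_phi' (hp : p ≠ 1) {t : ℝ} (ht : t ≠ 0) :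
    phi' p.conjExponent (phi p t) * phi' p t = 1 := by
  have hp' : p - 1 ≠ 0 := sub_ne_zero.2 hp
  rw [phi', phi', abs_phi hp, ← Real.rpow_mul (abs_nonneg t), mul_mul_mul_comm,
    ← Real.rpow_add (abs_pos.2 ht), Real.conjExponent]
  convert mul_one (1:ℝ) using 2
  · field_simp; ring
  · convert Real.rpow_zero |t| using 2
    field_simp
    ring

theorem mul_phi' (t : ℝ) : t * phi' p t = (p - 1) * phi p t := by
  unfold phi phi'
  ring

theorem hasDerivAt_mul_phi'_mul (hp : p ≠ 1) {U W : ℝ → ℝ} {x c d : ℝ}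
    (hU : ContinuousAt U x) (hW : ContinuousAt W x)
    (hG : HasDerivAt (fun y => phi p (U y)) c x)
    (hg : HasDerivAt (fun y => phi' p (U y) * W y) d x) :
    HasDerivAt (fun y => U y * (phi' p (U y) * W y)) (c * W x + U x * d) x := by
  have hp' : p - 1 ≠ 0 := sub_ne_zero.2 hp
  rcases eq_or_ne (U x) 0 with hUx | hUx
  · have hGx : phi p (U x) = 0 := by simp [phi, hUx]
    have hGW : HasDerivAt (fun y => U y * (phi' p (U y) * W y)) ((p - 1) * (c * W x)) x := by
      refine ((hG.mul_continuousAt_of_eq_zero hGx hW).const_mul (p - 1)).congr_of_eventuallyEq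
        (Eventually.of_forall fun y => ?_)
      simp only [← mul_assoc, mul_phi']
    suffices (p - 1) * (c * W x) = c * W x by rwa [hUx, zero_mul, add_zero, ← this]
    rcases eq_or_ne p 2 with rfl | hp2
    · ring
    -- for `p ≠ 2` the flux vanishes where `U` does, so `U * flux` has derivative `U x * d = 0`
    have hgx : phi' p (U x) * W x = 0 := by
      simp [phi', hUx, Real.zero_rpow (sub_ne_zero.2 hp2)]
    have hgU : HasDerivAt (fun y => U y * (phi' p (U y) * W y)) (d * U x) x :=
      (hg.mul_continuousAt_of_eq_zero hgx hU).congr_of_eventuallyEq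
        (Eventually.of_forall fun y => mul_comm _ _)
    have h0 : (p - 1) * (c * W x) = 0 := by rw [hGW.unique hgU, hUx, mul_zero]
    rw [h0, (mul_eq_zero.1 h0).resolve_left hp']
  · have hUG : HasDerivAt U (phi' p.conjExponent (phi p (U x)) * c) x := by
      have := (hasDerivAt_phi (p := p.conjExponent) (phi_ne_zero hp hUx)).comp x hG
      simpa only [Function.comp_def, phi_conjExponent_phi hp] using this
    refine (hUG.mul hg).congr_deriv ?_
    rw [mul_right_comm, ← mul_assoc, phi'_conjExponent_phi_mul_phi' hp hUx, one_mul,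
      mul_comm]

end Phi

section Problem

variable {p lam : ℝ} {f u w : ℝ → ℝ} {x : ℝ}

theorem hasDerivAt_du {v : ℝ → ℝ} (hv : ContDiffOn ℝ 1 v (Icc (-1) 1)) (hx : x ∈ Ioo (-1) 1) :
    HasDerivAt v (du v x) x := by
  have hmem : Icc (-1 : ℝ) 1 ∈ 𝓝 x := Icc_mem_nhds hx.1 hx.2
  rw [du, derivWithin_of_mem_nhds hmem]
  exact ((hv.differentiableOn one_ne_zero x (Ioo_subset_Icc_self hx)).differentiableAt
    hmem).hasDerivAt

theorem continuousAt_du {v : ℝ → ℝ} (hv : ContDiffOn ℝ 1 v (Icc (-1) 1))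
    (hx : x ∈ Ioo (-1) 1) : ContinuousAt (du v) x :=
  (hv.continuousOn_derivWithin (uniqueDiffOn_Icc (by norm_num)) le_rfl).continuousAt
    (Icc_mem_nhds hx.1 hx.2)

theorem hasDerivAt_of_deriv_add_eq_zero {F : ℝ → ℝ} {s : Set ℝ} {r : ℝ}
    (hF : ContDiffOn ℝ 1 F s) (hs : s ∈ 𝓝 x) (hr : deriv F x + r = 0) :
    HasDerivAt F (-r) x := by
  rw [← eq_neg_of_add_eq_zero_left hr]
  exact ((hF.differentiableOn one_ne_zero x (mem_of_mem_nhds hs)).differentiableAt hs).hasDerivAt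

theorem Sol1D.hasDerivAt_phi_du (hu : Sol1D p lam f u) (hx : x ∈ Ioo (-1) 1) :
    HasDerivAt (fun y => phi p (du u y)) (-(lam * f (u x))) x :=
  hasDerivAt_of_deriv_add_eq_zero hu.reg' (isOpen_Ioo.mem_nhds hx) (hu.ode x hx)

theorem Lin1D.hasDerivAt_flux (hw : Lin1D p lam f u w) (hx : x ∈ Ioo (-1) 1) :
    HasDerivAt (fun y => phi' p (du u y) * du w y) (-(lam * deriv f (u x) * w x)) x :=
  hasDerivAt_of_deriv_add_eq_zero hw.reg' (isOpen_Ioo.mem_nhds hx) (hw.ode x hx)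

/-- Formally `u'` solves the linearized equation, and this is the Wronskian of `u'` and `w`. -/
theorem Lin1D.hasDerivAt_wronskian (hp : p ≠ 1) (hu : Sol1D p lam f u)
    (hw : Lin1D p lam f u w) (hx : x ∈ Ioo (-1) 1) (hf : DifferentiableAt ℝ f (u x)) :
    HasDerivAt (fun y => (p - 1) * phi p (du u y) * du w y + lam * f (u y) * w y) 0 x := by
  have hflux := hasDerivAt_mul_phi'_mul hp (continuousAt_du hu.reg hx)
    (continuousAt_du hw.reg hx) (hu.hasDerivAt_phi_du hx) (hw.hasDerivAt_flux hx)
  have hfuw := ((hf.hasDerivAt.comp x (hasDerivAt_du hu.reg hx)).const_mul lam).mul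
    (hasDerivAt_du hw.reg hx)
  refine ((hflux.add hfuw).congr_of_eventuallyEq
    (Eventually.of_forall fun y => ?_)).congr_deriv ?_
  · simp only [Function.comp_apply, Pi.add_apply, Pi.mul_apply, ← mul_assoc, mul_phi']
  · simp only [Function.comp_apply]
    ring

end Problem

theorem stmt15_general (p : ℝ) (hp : 1 < p) (lam : ℝ)
    (f : ℝ → ℝ) (hf : ContDiffOn ℝ 1 f (Set.Ici 0))
    (u : ℝ → ℝ) (hu : Sol1D p lam f u)
    (w : ℝ → ℝ) (hw : Lin1D p lam f u w) :
    ∀ x ∈ Set.Ioo (-1:ℝ) 1,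
      deriv (fun y => y * ((p - 1) * phi p (du u y) * du w y + lam * f (u y) * w y)
          - (p - 1) * phi p (du u y) * w y) x
        = p * lam * f (u x) * w x := by
  intro x hx
  have hfu : DifferentiableAt ℝ f (u x) :=
    (hf.differentiableOn one_ne_zero (u x) (hu.pos x hx).le).differentiableAt
      (Ici_mem_nhds (hu.pos x hx))
  have hB := hw.hasDerivAt_wronskian hp.ne' hu hx hfu
  have hGw := (hu.hasDerivAt_phi_du hx).mul (hasDerivAt_du hw.reg hx)
  have hT := ((hasDerivAt_id' x).mul hB).sub (hGw.const_mul (p - 1))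
  refine (hT.congr_of_eventuallyEq (Eventually.of_forall fun y => ?_)).deriv.trans ?_
  · simp only [Pi.sub_apply, Pi.mul_apply]
    ring
  · ring

/-- Lemma 3.5: the identity `T'(x) = p λ f(u(x)) w(x)` for
`T(x) = x[(p-1)φ_p(u')w' + λ f(u) w] - (p-1)φ_p(u')w`. -/
theorem stmt15 (p : ℝ) (hp : 1 < p) (lam : ℝ) (hlam : 0 < lam)
    (f : ℝ → ℝ) (hf : ContDiffOn ℝ 1 f (Set.Ici 0))
    (u : ℝ → ℝ) (hu : Sol1D p lam f u)
    (w : ℝ → ℝ) (hw : Lin1D p lam f u w) :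
    ∀ x ∈ Set.Ioo (-1:ℝ) 1,
      deriv (fun y => y * ((p - 1) * phi p (du u y) * du w y + lam * f (u y) * w y)
          - (p - 1) * phi p (du u y) * w y) x
        = p * lam * f (u x) * w x :=
  stmt15_general p hp lam f hf u hu w hw
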